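/- Let R = k[X,Y,Z] be a polynomial ring over a field k and I = (X^2, XY, Y^2, Z^c, X*Z^a, Y*Z^b) with integers 1 ≤ a ≤ b ≤ ⌈c/2⌉ and c ≥ 2. Then the ideal I^2 is integrally closed. -/

import Mathlib

/-- `r` is integral over the ideal `I`: it satisfies an equation
`r^m + a_1 r^(m-1) + ... + a_m = 0` with `a_j ∈ I^j`. -/
def IsIntegralOverIdeal {R : Type*} [CommRing R] (I : Ideal R) (r : R) : Prop :=
  ∃ m : ℕ, 0 < m ∧ ∃ a : ℕ → R, (∀ j ∈ Finset.Icc 1 m, a j ∈ I ^ j) ∧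
    r ^ m + ∑ j ∈ Finset.Icc 1 m, a j * r ^ (m - j) = 0

/-- An ideal is integrally closed if it contains every element integral over it. -/
def Ideal.IsIntClosed {R : Type*} [CommRing R] (I : Ideal R) : Prop :=
  ∀ r, IsIntegralOverIdeal I r → r ∈ I

namespace IntClosedAux

open MvPolynomial

/-! ### Weights on exponent vectors -/

/-- weight of an exponent vector -/
def wt (w : Fin 3 → ℕ) (α : Fin 3 →₀ ℕ) : ℕ := w 0 * α 0 + w 1 * α 1 + w 2 * α 2

lemma wt_add (w : Fin 3 → ℕ) (α β : Fin 3 →₀ ℕ) : wt w (α + β) = wt w α + wt w β := by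
  simp [wt, Finsupp.add_apply]; ring

lemma wt_smul (w : Fin 3 → ℕ) (n : ℕ) (α : Fin 3 →₀ ℕ) : wt w (n • α) = n * wt w α := by
  simp [wt, Finsupp.smul_apply, smul_eq_mul]; ring

variable {k : Type*} [Field k]

/-- the monomial ideal of all polys whose exponents have weight ≥ u -/
def M (k : Type*) [Field k] (w : Fin 3 → ℕ) (u : ℕ) : Ideal (MvPolynomial (Fin 3) k) where
  carrier := {f | ∀ μ ∈ f.support, u ≤ wt w μ}
  zero_mem' := by simp
  add_mem' := by
    intro f g hf hg μ hμ
    rcases Finset.mem_union.1 (MvPolynomial.support_add hμ) with h | h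
    exacts [hf μ h, hg μ h]
  smul_mem' := by
    classical
    intro cc f hf μ hμ
    rw [smul_eq_mul] at hμ
    obtain ⟨u1, hu1, u2, hu2, rfl⟩ := Finset.mem_add.1 (MvPolynomial.support_mul _ _ hμ)
    rw [wt_add]
    exact le_add_of_le_right (hf u2 hu2)

lemma mem_M_iff {w u} {f : MvPolynomial (Fin 3) k} :
    f ∈ M k w u ↔ ∀ μ ∈ f.support, u ≤ wt w μ := Iff.rfl

lemma M_mul_le {w : Fin 3 → ℕ} {u v : ℕ} : M k w u * M k w v ≤ M k w (u + v) := by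
  classical
  rw [Ideal.mul_le]
  intro f hf g hg μ hμ
  obtain ⟨u1, hu1, u2, hu2, rfl⟩ := Finset.mem_add.1 (MvPolynomial.support_mul _ _ hμ)
  rw [wt_add]
  exact add_le_add (hf u1 hu1) (hg u2 hu2)

lemma pow_le_M {J : Ideal (MvPolynomial (Fin 3) k)} {w u} (hJ : J ≤ M k w u) :
    ∀ n : ℕ, J ^ n ≤ M k w (n * u)
  | 0 => by
      simp only [pow_zero, Ideal.one_eq_top, zero_mul]
      intro f _ μ _; exact Nat.zero_le _
  | (n+1) => by
      rw [pow_succ]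
      calc J ^ n * J ≤ M k w (n * u) * M k w u :=
            Ideal.mul_mono (pow_le_M hJ n) hJ
        _ ≤ M k w (n * u + u) := M_mul_le
        _ = M k w ((n+1) * u) := by ring_nf

/-! ### Base-K lexicographic comparison -/

lemma L1 {A A' B K : ℕ} (B' : ℕ) (hB : B < K) (hAA : A < A') : A * K + B < A' * K + B' :=
  calc A * K + B < A * K + K := by omega
    _ = (A + 1) * K := by ring
    _ ≤ A' * K := Nat.mul_le_mul_right K hAA
    _ ≤ A' * K + B' := Nat.le_add_right _ _

lemma L2 {A A' B B' K : ℕ} (hB : B < K) (hB' : B' < K) (h : A * K + B = A' * K + B') :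
    A = A' ∧ B = B' := by
  rcases lt_trichotomy A A' with h' | h' | h'
  · exact absurd h (Nat.ne_of_lt (L1 B' hB h'))
  · refine ⟨h', ?_⟩
    subst h'
    exact Nat.add_left_cancel h
  · exact absurd h.symm (Nat.ne_of_lt (L1 B hB' h'))

/-! ### Supports of powers -/

lemma pow_supp_bound (φ : (Fin 3 →₀ ℕ) → ℕ) (hφ : ∀ x y, φ (x + y) = φ x + φ y)
    (f : MvPolynomial (Fin 3) k) (t : ℕ) (hf : ∀ s ∈ f.support, t ≤ φ s) :
    ∀ n : ℕ, ∀ β ∈ (f ^ n).support, n * t ≤ φ β := by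
  classical
  intro n
  induction n with
  | zero => intro β _; simp
  | succ n ih =>
      intro β hβ
      rw [pow_succ] at hβ
      obtain ⟨u1, hu1, u2, hu2, rfl⟩ := Finset.mem_add.1 (MvPolynomial.support_mul _ _ hβ)
      rw [hφ]
      calc (n + 1) * t = n * t + t := by ring
        _ ≤ φ u1 + φ u2 := add_le_add (ih u1 hu1) (hf u2 hu2)

lemma phi_smul (φ : (Fin 3 →₀ ℕ) → ℕ) (hφ : ∀ x y, φ (x + y) = φ x + φ y) :
    ∀ (n : ℕ) (μ : Fin 3 →₀ ℕ), φ (n • μ) = n * φ μ := by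
  have h0 : φ 0 = 0 := by have := hφ 0 0; simp at this; omega
  intro n μ
  induction n with
  | zero => simpa using h0
  | succ n ih => rw [succ_nsmul, hφ, ih]; ring

/-- coefficient of the power of the minimal monomial -/
lemma pow_coeff (f : MvPolynomial (Fin 3) k) (m0 : Fin 3 →₀ ℕ)
    (κ : (Fin 3 →₀ ℕ) → ℕ) (hκ : ∀ x y, κ (x + y) = κ x + κ y)
    (hmin : ∀ s ∈ f.support, κ m0 ≤ κ s)
    (hinj : ∀ s ∈ f.support, κ s = κ m0 → s = m0) :
    ∀ n : ℕ, MvPolynomial.coeff (n • m0) (f ^ n) = MvPolynomial.coeff m0 f ^ n := by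
  classical
  intro n
  induction n with
  | zero => simp
  | succ n ih =>
      rw [pow_succ, succ_nsmul, MvPolynomial.coeff_mul]
      rw [Finset.sum_eq_single_of_mem (n • m0, m0)
        (Finset.HasAntidiagonal.mem_antidiagonal.2 rfl) ?_, ih, pow_succ]
      intro p hp hne
      have hsum := Finset.HasAntidiagonal.mem_antidiagonal.1 hp
      by_contra hzero
      obtain ⟨h1, h2⟩ := mul_ne_zero_iff.1 hzero
      have hp1 : p.1 ∈ (f ^ n).support := MvPolynomial.mem_support_iff.2 h1
      have hp2 : p.2 ∈ f.support := MvPolynomial.mem_support_iff.2 h2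
      have hb1 : n * κ m0 ≤ κ p.1 := pow_supp_bound κ hκ f (κ m0) hmin n p.1 hp1
      have hb2 : κ m0 ≤ κ p.2 := hmin p.2 hp2
      have hκsum : κ p.1 + κ p.2 = n * κ m0 + κ m0 := by
        rw [← hκ, hsum, hκ, phi_smul κ hκ]
      have hκ2 : κ p.2 = κ m0 := by omega
      have hp2m : p.2 = m0 := hinj p.2 hp2 hκ2
      have hp1m : p.1 = n • m0 := by
        rw [hp2m] at hsum
        exact add_right_cancel hsum
      exact hne (Prod.ext hp1m hp2m)

/-! ### The valuation bound for integral elements -/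

theorem suppBound {J : Ideal (MvPolynomial (Fin 3) k)} {w : Fin 3 → ℕ} {u : ℕ}
    (hJ : J ≤ M k w u) {r : MvPolynomial (Fin 3) k}
    (hr : IsIntegralOverIdeal J r) : ∀ α ∈ r.support, u ≤ wt w α := by
  classical
  obtain ⟨N, hN, aj, haj, heq⟩ := hr
  intro α hα
  set S := r.support with hS
  have hSne : S.Nonempty := ⟨α, hα⟩
  set K : ℕ := 1 + S.sup (fun s => wt w s + s 0 + s 1 + s 2) with hK
  have hKbound : ∀ s ∈ S, wt w s < K ∧ s 0 < K ∧ s 1 < K ∧ s 2 < K := by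
    intro s hs
    have h := Finset.le_sup (f := fun s => wt w s + s 0 + s 1 + s 2) hs
    omega
  set κ : (Fin 3 →₀ ℕ) → ℕ :=
    fun s => ((wt w s * K + s 0) * K + s 1) * K + s 2 with hκdef
  have hκadd : ∀ x y, κ (x + y) = κ x + κ y := by
    intro x y
    simp only [hκdef, wt_add, Finsupp.add_apply]
    ring
  obtain ⟨m0, hm0S, hm0min⟩ := Finset.exists_min_image S κ hSne
  have hwtlt : ∀ s s' : Fin 3 →₀ ℕ, s ∈ S → s' ∈ S → wt w s < wt w s' → κ s < κ s' := by
    intro s s' hs hs' hlt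
    obtain ⟨h1, h2, h3, h4⟩ := hKbound s hs
    apply L1 _ h4
    apply L1 _ h3
    exact L1 _ h2 hlt
  have hwtmin : ∀ s ∈ S, wt w m0 ≤ wt w s := by
    intro s hs
    by_contra hcon
    exact absurd (hm0min s hs) (not_le.2 (hwtlt s m0 hs hm0S (by omega)))
  have hinj : ∀ s ∈ S, κ s = κ m0 → s = m0 := by
    intro s hs hseq
    obtain ⟨h1, h2, h3, h4⟩ := hKbound s hs
    obtain ⟨g1, g2, g3, g4⟩ := hKbound m0 hm0S
    simp only [hκdef] at hseq
    obtain ⟨e1, e2⟩ := L2 h4 g4 hseq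
    obtain ⟨e3, e4⟩ := L2 h3 g3 e1
    obtain ⟨e5, e6⟩ := L2 h2 g2 e3
    ext i
    fin_cases i <;> assumption
  have hc0 : MvPolynomial.coeff m0 r ≠ 0 := MvPolynomial.mem_support_iff.1 hm0S
  have hcoeffpow : MvPolynomial.coeff (N • m0) (r ^ N) = MvPolynomial.coeff m0 r ^ N :=
    pow_coeff r m0 κ hκadd hm0min hinj N
  have heqc : MvPolynomial.coeff m0 r ^ N
      + ∑ j ∈ Finset.Icc 1 N, MvPolynomial.coeff (N • m0) (aj j * r ^ (N - j)) = 0 := by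
    have := congrArg (MvPolynomial.coeff (N • m0)) heq
    simpa [MvPolynomial.coeff_add, MvPolynomial.coeff_sum, hcoeffpow] using this
  have hsumne : ∃ j ∈ Finset.Icc 1 N,
      MvPolynomial.coeff (N • m0) (aj j * r ^ (N - j)) ≠ 0 := by
    by_contra hcon
    push_neg at hcon
    rw [Finset.sum_eq_zero hcon, add_zero] at heqc
    exact pow_ne_zero N hc0 heqc
  obtain ⟨j, hjmem, hjne⟩ := hsumne
  have hj1 : 1 ≤ j := (Finset.mem_Icc.1 hjmem).1
  have hjN : j ≤ N := (Finset.mem_Icc.1 hjmem).2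
  have hmem : N • m0 ∈ (aj j * r ^ (N - j)).support := MvPolynomial.mem_support_iff.2 hjne
  obtain ⟨μ, hμ, ν, hν, hμν⟩ := Finset.mem_add.1 (MvPolynomial.support_mul _ _ hmem)
  have hμb : j * u ≤ wt w μ := by
    have := pow_le_M hJ j (haj j hjmem)
    exact mem_M_iff.1 this μ hμ
  have hνb : (N - j) * wt w m0 ≤ wt w ν :=
    pow_supp_bound (wt w) (wt_add w) r (wt w m0) hwtmin (N - j) ν hν
  have htot : N * wt w m0 = wt w μ + wt w ν := by
    rw [← wt_add, hμν, wt_smul]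
  have hsplit : j * wt w m0 + (N - j) * wt w m0 = N * wt w m0 := by
    rw [← Nat.add_mul]
    congr 1
    omega
  have hju : j * u ≤ j * wt w m0 := by omega
  have : u ≤ wt w m0 := Nat.le_of_mul_le_mul_left hju (by omega)
  exact le_trans this (hwtmin α hα)

/-! ### The generators of the ideal as monomials -/

lemma X_eq_monomial (n : Fin 3) :
    (X n : MvPolynomial (Fin 3) k) = monomial (Finsupp.single n 1) 1 := by
  rw [← pow_one (X n : MvPolynomial (Fin 3) k), X_pow_eq_monomial]

lemma XX_eq (i j : Fin 3) (e : ℕ) :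
    (X i * X j ^ e : MvPolynomial (Fin 3) k)
      = monomial (Finsupp.single i 1 + Finsupp.single j e) 1 := by
  rw [X_eq_monomial, X_pow_eq_monomial, monomial_mul, one_mul]

noncomputable def eA : Fin 3 →₀ ℕ := Finsupp.single 0 2
noncomputable def eB : Fin 3 →₀ ℕ := Finsupp.single 0 1 + Finsupp.single 1 1
noncomputable def eC : Fin 3 →₀ ℕ := Finsupp.single 1 2
noncomputable def eD (c : ℕ) : Fin 3 →₀ ℕ := Finsupp.single 2 c
noncomputable def eE (a : ℕ) : Fin 3 →₀ ℕ := Finsupp.single 0 1 + Finsupp.single 2 a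
noncomputable def eF (b : ℕ) : Fin 3 →₀ ℕ := Finsupp.single 1 1 + Finsupp.single 2 b

section coords
variable (a b c : ℕ)

lemma eA_0 : eA 0 = 2 := by simp [eA]
lemma eA_1 : eA 1 = 0 := by simp [eA, Finsupp.single_apply]
lemma eA_2 : eA 2 = 0 := by simp [eA, Finsupp.single_apply]
lemma eB_0 : eB 0 = 1 := by simp [eB, Finsupp.single_apply]
lemma eB_1 : eB 1 = 1 := by simp [eB, Finsupp.single_apply]
lemma eB_2 : eB 2 = 0 := by simp [eB, Finsupp.single_apply]
lemma eC_0 : eC 0 = 0 := by simp [eC, Finsupp.single_apply]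
lemma eC_1 : eC 1 = 2 := by simp [eC]
lemma eC_2 : eC 2 = 0 := by simp [eC, Finsupp.single_apply]
lemma eD_0 : eD c 0 = 0 := by simp [eD, Finsupp.single_apply]
lemma eD_1 : eD c 1 = 0 := by simp [eD, Finsupp.single_apply]
lemma eD_2 : eD c 2 = c := by simp [eD]
lemma eE_0 : eE a 0 = 1 := by simp [eE, Finsupp.single_apply]
lemma eE_1 : eE a 1 = 0 := by simp [eE, Finsupp.single_apply]
lemma eE_2 : eE a 2 = a := by simp [eE, Finsupp.single_apply]
lemma eF_0 : eF b 0 = 0 := by simp [eF, Finsupp.single_apply]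
lemma eF_1 : eF b 1 = 1 := by simp [eF, Finsupp.single_apply]
lemma eF_2 : eF b 2 = b := by simp [eF, Finsupp.single_apply]

lemma wt_eA (w : Fin 3 → ℕ) : wt w eA = 2 * w 0 := by
  simp [wt, eA_0, eA_1, eA_2]; ring
lemma wt_eB (w : Fin 3 → ℕ) : wt w eB = w 0 + w 1 := by
  simp [wt, eB_0, eB_1, eB_2]
lemma wt_eC (w : Fin 3 → ℕ) : wt w eC = 2 * w 1 := by
  simp [wt, eC_0, eC_1, eC_2]; ring
lemma wt_eD (w : Fin 3 → ℕ) : wt w (eD c) = w 2 * c := by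
  simp [wt, eD_0, eD_1, eD_2]
lemma wt_eE (w : Fin 3 → ℕ) : wt w (eE a) = w 0 + w 2 * a := by
  simp [wt, eE_0, eE_1, eE_2]
lemma wt_eF (w : Fin 3 → ℕ) : wt w (eF b) = w 1 + w 2 * b := by
  simp [wt, eF_0, eF_1, eF_2]

variable (I : Ideal (MvPolynomial (Fin 3) k))
variable (hI : I = Ideal.span {X 0 ^ 2, X 0 * X 1, X 1 ^ 2, X 2 ^ c,
      X 0 * X 2 ^ a, X 1 * X 2 ^ b})

include hI in
lemma genA_mem : monomial eA (1:k) ∈ I := by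
  rw [hI, eA, ← X_pow_eq_monomial]
  exact Ideal.subset_span (by simp)

include hI in
lemma genB_mem : monomial eB (1:k) ∈ I := by
  rw [hI, eB, ← XX_eq]
  refine Ideal.subset_span ?_
  simp [pow_one]

include hI in
lemma genC_mem : monomial eC (1:k) ∈ I := by
  rw [hI, eC, ← X_pow_eq_monomial]
  exact Ideal.subset_span (by simp)

include hI in
lemma genD_mem : monomial (eD c) (1:k) ∈ I := by
  rw [hI, eD, ← X_pow_eq_monomial]
  exact Ideal.subset_span (by simp)

include hI in
lemma genE_mem : monomial (eE a) (1:k) ∈ I := by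
  rw [hI, eE, ← XX_eq]
  exact Ideal.subset_span (by simp)

include hI in
lemma genF_mem : monomial (eF b) (1:k) ∈ I := by
  rw [hI, eF, ← XX_eq]
  exact Ideal.subset_span (by simp)

include hI in
lemma I_le_M (w : Fin 3 → ℕ) (u : ℕ)
    (h1 : u ≤ 2 * w 0) (h2 : u ≤ w 0 + w 1) (h3 : u ≤ 2 * w 1)
    (h4 : u ≤ w 2 * c) (h5 : u ≤ w 0 + w 2 * a) (h6 : u ≤ w 1 + w 2 * b) :
    I ≤ M k w u := by
  classical
  rw [hI, Ideal.span_le]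
  intro f hf
  simp only [Set.mem_insert_iff, Set.mem_singleton_iff] at hf
  have key : ∀ (g : Fin 3 →₀ ℕ), u ≤ wt w g → monomial g (1:k) ∈ M k w u := by
    intro g hg
    rw [mem_M_iff]
    intro μ hμ
    rw [support_monomial, if_neg one_ne_zero] at hμ
    rw [Finset.mem_singleton.1 hμ]
    exact hg
  rcases hf with rfl | rfl | rfl | rfl | rfl | rfl
  · rw [X_pow_eq_monomial]
    exact key _ (by rw [← eA, wt_eA]; exact h1)
  · rw [show (X 0 * X 1 : MvPolynomial (Fin 3) k) = X 0 * X 1 ^ 1 by rw [pow_one], XX_eq]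
    exact key _ (by rw [← eB, wt_eB]; exact h2)
  · rw [X_pow_eq_monomial]
    exact key _ (by rw [← eC, wt_eC]; exact h3)
  · rw [X_pow_eq_monomial]
    exact key _ (by rw [← eD, wt_eD]; exact h4)
  · rw [XX_eq]
    exact key _ (by rw [← eE, wt_eE]; exact h5)
  · rw [XX_eq]
    exact key _ (by rw [← eF, wt_eF]; exact h6)

/-- a monomial dominated by the sum of two generators lies in I² -/
lemma mono_mem_sq (g₁ g₂ α : Fin 3 →₀ ℕ) (t : k)
    (h₁ : monomial g₁ (1:k) ∈ I) (h₂ : monomial g₂ (1:k) ∈ I)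
    (hle : ∀ i, g₁ i + g₂ i ≤ α i) : monomial α t ∈ I ^ 2 := by
  have hgle : g₁ + g₂ ≤ α := by
    rw [Finsupp.le_def]
    intro i
    rw [Finsupp.add_apply]
    exact hle i
  have heq : monomial α t = monomial (α - (g₁ + g₂)) t * (monomial g₁ 1 * monomial g₂ 1) := by
    rw [monomial_mul, monomial_mul, mul_one, mul_one, tsub_add_cancel_of_le hgle]
  rw [heq, pow_two]
  exact Ideal.mul_mem_left _ _ (Ideal.mul_mem_mul h₁ h₂)

lemma mono_mem_sq' (g₁ g₂ α : Fin 3 →₀ ℕ) (t : k)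
    (h₁ : monomial g₁ (1:k) ∈ I) (h₂ : monomial g₂ (1:k) ∈ I)
    (e0 : g₁ 0 + g₂ 0 ≤ α 0) (e1 : g₁ 1 + g₂ 1 ≤ α 1) (e2 : g₁ 2 + g₂ 2 ≤ α 2) :
    monomial α t ∈ I ^ 2 :=
  mono_mem_sq I g₁ g₂ α t h₁ h₂ (by intro i; fin_cases i; exacts [e0, e1, e2])

end coords

/-! ### Combinatorial classification -/

lemma classifyA (a b c x y z : ℕ) (ha : 1 ≤ a) (hab : a ≤ b) (hbc : 2*b ≤ c)
    (h1 : 2*c ≤ c*x + c*y + 1*z)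
    (h2 : 2*c ≤ c*x + (c-b)*y + 1*z)
    (h3 : 2*c ≤ (c-a)*x + c*y + 1*z)
    (h4 : 2*(2*b) ≤ (2*b-a)*x + b*y + 1*z)
    (h5 : 2*(2*a) ≤ a*x + a*y + 1*z) :
    (4 ≤ x) ∨ (3 ≤ x ∧ 1 ≤ y) ∨ (2 ≤ x ∧ 2 ≤ y) ∨ (1 ≤ x ∧ 3 ≤ y) ∨ (4 ≤ y) ∨
    (3 ≤ x ∧ a ≤ z) ∨ (2 ≤ x ∧ 1 ≤ y ∧ a ≤ z) ∨ (1 ≤ x ∧ 2 ≤ y ∧ a ≤ z) ∨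
    (3 ≤ y ∧ b ≤ z) ∨
    (2 ≤ x ∧ 2*a ≤ z) ∨ (2 ≤ x ∧ c ≤ z) ∨
    (1 ≤ x ∧ 1 ≤ y ∧ a + b ≤ z) ∨ (1 ≤ x ∧ 1 ≤ y ∧ c ≤ z) ∨
    (2 ≤ y ∧ 2*b ≤ z) ∨ (2 ≤ y ∧ c ≤ z) ∨
    (1 ≤ x ∧ a + c ≤ z) ∨ (1 ≤ y ∧ b + c ≤ z) ∨ (2*c ≤ z) := by
  rcases le_or_gt 4 (x + y) with h | h
  · clear h1 h2 h3 h4 h5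
    omega
  · have hx : x ≤ 3 := by clear h1 h2 h3 h4 h5; omega
    have hy : y ≤ 3 := by clear h1 h2 h3 h4 h5; omega
    interval_cases x <;> interval_cases y <;> omega

lemma classifyB (a b c x y z : ℕ) (ha : 1 ≤ a) (hab : a ≤ b) (hbc : 2*b = c + 1)
    (hac : 2*a ≤ c)
    (h1 : 2*c ≤ c*x + c*y + 1*z)
    (h2 : 2*(2*c) ≤ (2*c)*x + c*y + 2*z)
    (h3 : 2*c ≤ (c-a)*x + c*y + 1*z)
    (h4 : 2*(2*c) ≤ (2*c-2*a)*x + c*y + 2*z)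
    (h5 : 2*(2*a) ≤ a*x + a*y + 1*z) :
    (4 ≤ x) ∨ (3 ≤ x ∧ 1 ≤ y) ∨ (2 ≤ x ∧ 2 ≤ y) ∨ (1 ≤ x ∧ 3 ≤ y) ∨ (4 ≤ y) ∨
    (3 ≤ x ∧ a ≤ z) ∨ (2 ≤ x ∧ 1 ≤ y ∧ a ≤ z) ∨ (1 ≤ x ∧ 2 ≤ y ∧ a ≤ z) ∨
    (3 ≤ y ∧ b ≤ z) ∨
    (2 ≤ x ∧ 2*a ≤ z) ∨ (2 ≤ x ∧ c ≤ z) ∨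
    (1 ≤ x ∧ 1 ≤ y ∧ a + b ≤ z) ∨ (1 ≤ x ∧ 1 ≤ y ∧ c ≤ z) ∨
    (2 ≤ y ∧ 2*b ≤ z) ∨ (2 ≤ y ∧ c ≤ z) ∨
    (1 ≤ x ∧ a + c ≤ z) ∨ (1 ≤ y ∧ b + c ≤ z) ∨ (2*c ≤ z) := by
  rcases le_or_gt 4 (x + y) with h | h
  · clear h1 h2 h3 h4 h5
    omega
  · have hx : x ≤ 3 := by clear h1 h2 h3 h4 h5; omega
    have hy : y ≤ 3 := by clear h1 h2 h3 h4 h5; omega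
    interval_cases x <;> interval_cases y <;> omega

lemma classifyC (a b c x y z : ℕ) (ha : 1 ≤ a) (hba : b = a) (hac : 2*a = c + 1)
    (h1 : 2*c ≤ c*x + c*y + 1*z)
    (h2 : 2*(2*c) ≤ c*x + c*y + 2*z) :
    (4 ≤ x) ∨ (3 ≤ x ∧ 1 ≤ y) ∨ (2 ≤ x ∧ 2 ≤ y) ∨ (1 ≤ x ∧ 3 ≤ y) ∨ (4 ≤ y) ∨
    (3 ≤ x ∧ a ≤ z) ∨ (2 ≤ x ∧ 1 ≤ y ∧ a ≤ z) ∨ (1 ≤ x ∧ 2 ≤ y ∧ a ≤ z) ∨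
    (3 ≤ y ∧ b ≤ z) ∨
    (2 ≤ x ∧ 2*a ≤ z) ∨ (2 ≤ x ∧ c ≤ z) ∨
    (1 ≤ x ∧ 1 ≤ y ∧ a + b ≤ z) ∨ (1 ≤ x ∧ 1 ≤ y ∧ c ≤ z) ∨
    (2 ≤ y ∧ 2*b ≤ z) ∨ (2 ≤ y ∧ c ≤ z) ∨
    (1 ≤ x ∧ a + c ≤ z) ∨ (1 ≤ y ∧ b + c ≤ z) ∨ (2*c ≤ z) := by
  rcases le_or_gt 4 (x + y) with h | h
  · clear h1 h2
    omega
  · have hx : x ≤ 3 := by clear h1 h2; omega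
    have hy : y ≤ 3 := by clear h1 h2; omega
    interval_cases x <;> interval_cases y <;> omega

end IntClosedAux

open MvPolynomial in
theorem stmt_3 {k : Type*} [Field k] (a b c : ℕ) (ha : 1 ≤ a) (hab : a ≤ b)
    (hb : b ≤ (c + 1) / 2) (hc : 2 ≤ c)
    (I : Ideal (MvPolynomial (Fin 3) k))
    (hI : I = Ideal.span {X 0 ^ 2, X 0 * X 1, X 1 ^ 2, X 2 ^ c,
      X 0 * X 2 ^ a, X 1 * X 2 ^ b}) :
    (I ^ 2).IsIntClosed := by
  classical
  open IntClosedAux in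
  intro r hr
  -- the valuation bound for each weight vector (p, q, s)
  have key : ∀ p q s u : ℕ, u ≤ 2*p → u ≤ p + q → u ≤ 2*q → u ≤ s*c →
      u ≤ p + s*a → u ≤ q + s*b →
      ∀ α ∈ r.support, 2*u ≤ p * α 0 + q * α 1 + s * α 2 := by
    intro p q s u h1 h2 h3 h4 h5 h6 α hα
    have hw0 : (![p, q, s] : Fin 3 → ℕ) 0 = p := rfl
    have hw1 : (![p, q, s] : Fin 3 → ℕ) 1 = q := rfl
    have hw2 : (![p, q, s] : Fin 3 → ℕ) 2 = s := rfl
    have hle : I ≤ M k ![p, q, s] u := by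
      apply I_le_M a b c I hI ![p, q, s] u <;>
        simp only [hw0, hw1, hw2] <;> assumption
    have hsq : I ^ 2 ≤ M k ![p, q, s] (2*u) := by
      have h2' := pow_le_M hle 2
      exact h2'
    have := suppBound hsq hr α hα
    rw [wt, hw0, hw1, hw2] at this
    exact this
  -- generator memberships
  have hAm := genA_mem a b c I hI
  have hBm := genB_mem a b c I hI
  have hCm := genC_mem a b c I hI
  have hDm := genD_mem a b c I hI
  have hEm := genE_mem a b c I hI
  have hFm := genF_mem a b c I hI
  -- write r as sum of its monomials
  rw [← MvPolynomial.support_sum_monomial_coeff r]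
  apply Ideal.sum_mem
  intro α hα
  -- derive the domination disjunction in each of the three parameter cases
  have hdom : (4 ≤ α 0) ∨ (3 ≤ α 0 ∧ 1 ≤ α 1) ∨ (2 ≤ α 0 ∧ 2 ≤ α 1) ∨
      (1 ≤ α 0 ∧ 3 ≤ α 1) ∨ (4 ≤ α 1) ∨
      (3 ≤ α 0 ∧ a ≤ α 2) ∨ (2 ≤ α 0 ∧ 1 ≤ α 1 ∧ a ≤ α 2) ∨
      (1 ≤ α 0 ∧ 2 ≤ α 1 ∧ a ≤ α 2) ∨
      (3 ≤ α 1 ∧ b ≤ α 2) ∨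
      (2 ≤ α 0 ∧ 2*a ≤ α 2) ∨ (2 ≤ α 0 ∧ c ≤ α 2) ∨
      (1 ≤ α 0 ∧ 1 ≤ α 1 ∧ a + b ≤ α 2) ∨ (1 ≤ α 0 ∧ 1 ≤ α 1 ∧ c ≤ α 2) ∨
      (2 ≤ α 1 ∧ 2*b ≤ α 2) ∨ (2 ≤ α 1 ∧ c ≤ α 2) ∨
      (1 ≤ α 0 ∧ a + c ≤ α 2) ∨ (1 ≤ α 1 ∧ b + c ≤ α 2) ∨ (2*c ≤ α 2) := by
    rcases show (2*b ≤ c ∧ 2*a ≤ c) ∨ (2*b = c + 1 ∧ 2*a ≤ c) ∨ (2*a = c + 1 ∧ b = a)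
        from by omega with ⟨hB2, hA2⟩ | ⟨hB2, hA2⟩ | ⟨hA2, hba⟩
    · have k1 := key c c 1 c (by omega) (by omega) (by omega) (by omega) (by omega)
        (by omega) α hα
      have k2 := key c (c-b) 1 c (by omega) (by omega) (by omega) (by omega) (by omega)
        (by omega) α hα
      have k3 := key (c-a) c 1 c (by omega) (by omega) (by omega) (by omega) (by omega)
        (by omega) α hα
      have k4 := key (2*b-a) b 1 (2*b) (by omega) (by omega) (by omega) (by omega)
        (by omega) (by omega) α hα
      have k5 := key a a 1 (2*a) (by omega) (by omega) (by omega) (by omega) (by omega)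
        (by omega) α hα
      exact classifyA a b c (α 0) (α 1) (α 2) ha hab hB2 k1 k2 k3 k4 k5
    · have k1 := key c c 1 c (by omega) (by omega) (by omega) (by omega) (by omega)
        (by omega) α hα
      have k2 := key (2*c) c 2 (2*c) (by omega) (by omega) (by omega) (by omega)
        (by omega) (by omega) α hα
      have k3 := key (c-a) c 1 c (by omega) (by omega) (by omega) (by omega) (by omega)
        (by omega) α hα
      have k4 := key (2*c-2*a) c 2 (2*c) (by omega) (by omega) (by omega) (by omega)
        (by omega) (by omega) α hα
      have k5 := key a a 1 (2*a) (by omega) (by omega) (by omega) (by omega) (by omega)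
        (by omega) α hα
      exact classifyB a b c (α 0) (α 1) (α 2) ha hab hB2 hA2 k1 k2 k3 k4 k5
    · have k1 := key c c 1 c (by omega) (by omega) (by omega) (by omega) (by omega)
        (by omega) α hα
      have k2 := key c c 2 (2*c) (by omega) (by omega) (by omega) (by omega) (by omega)
        (by omega) α hα
      exact classifyC a b c (α 0) (α 1) (α 2) ha hba hA2 k1 k2
  rcases hdom with h | ⟨h, h'⟩ | ⟨h, h'⟩ | ⟨h, h'⟩ | h | ⟨h, h'⟩ | ⟨h, h', h''⟩ |
    ⟨h, h', h''⟩ | ⟨h, h'⟩ | ⟨h, h'⟩ | ⟨h, h'⟩ | ⟨h, h', h''⟩ | ⟨h, h', h''⟩ |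
    ⟨h, h'⟩ | ⟨h, h'⟩ | ⟨h, h'⟩ | ⟨h, h'⟩ | h
  · exact mono_mem_sq' I _ _ α _ hAm hAm (by rw [eA_0]; omega)
      (by rw [eA_1]; omega) (by rw [eA_2]; omega)
  · exact mono_mem_sq' I _ _ α _ hAm hBm (by rw [eA_0, eB_0]; omega)
      (by rw [eA_1, eB_1]; omega) (by rw [eA_2, eB_2]; omega)
  · exact mono_mem_sq' I _ _ α _ hAm hCm (by rw [eA_0, eC_0]; omega)
      (by rw [eA_1, eC_1]; omega) (by rw [eA_2, eC_2]; omega)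
  · exact mono_mem_sq' I _ _ α _ hBm hCm (by rw [eB_0, eC_0]; omega)
      (by rw [eB_1, eC_1]; omega) (by rw [eB_2, eC_2]; omega)
  · exact mono_mem_sq' I _ _ α _ hCm hCm (by rw [eC_0]; omega)
      (by rw [eC_1]; omega) (by rw [eC_2]; omega)
  · exact mono_mem_sq' I _ _ α _ hAm hEm (by rw [eA_0, eE_0]; omega)
      (by rw [eA_1, eE_1]; omega) (by rw [eA_2, eE_2]; omega)
  · exact mono_mem_sq' I _ _ α _ hBm hEm (by rw [eB_0, eE_0]; omega)
      (by rw [eB_1, eE_1]; omega) (by rw [eB_2, eE_2]; omega)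
  · exact mono_mem_sq' I _ _ α _ hCm hEm (by rw [eC_0, eE_0]; omega)
      (by rw [eC_1, eE_1]; omega) (by rw [eC_2, eE_2]; omega)
  · exact mono_mem_sq' I _ _ α _ hCm hFm (by rw [eC_0, eF_0]; omega)
      (by rw [eC_1, eF_1]; omega) (by rw [eC_2, eF_2]; omega)
  · exact mono_mem_sq' I _ _ α _ hEm hEm (by rw [eE_0]; omega)
      (by rw [eE_1]; omega) (by rw [eE_2]; omega)
  · exact mono_mem_sq' I _ _ α _ hAm hDm (by rw [eA_0, eD_0]; omega)
      (by rw [eA_1, eD_1]; omega) (by rw [eA_2, eD_2]; omega)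
  · exact mono_mem_sq' I _ _ α _ hEm hFm (by rw [eE_0, eF_0]; omega)
      (by rw [eE_1, eF_1]; omega) (by rw [eE_2, eF_2]; omega)
  · exact mono_mem_sq' I _ _ α _ hBm hDm (by rw [eB_0, eD_0]; omega)
      (by rw [eB_1, eD_1]; omega) (by rw [eB_2, eD_2]; omega)
  · exact mono_mem_sq' I _ _ α _ hFm hFm (by rw [eF_0]; omega)
      (by rw [eF_1]; omega) (by rw [eF_2]; omega)
  · exact mono_mem_sq' I _ _ α _ hCm hDm (by rw [eC_0, eD_0]; omega)
      (by rw [eC_1, eD_1]; omega) (by rw [eC_2, eD_2]; omega)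
  · exact mono_mem_sq' I _ _ α _ hDm hEm (by rw [eD_0, eE_0]; omega)
      (by rw [eD_1, eE_1]; omega) (by rw [eD_2, eE_2]; omega)
  · exact mono_mem_sq' I _ _ α _ hDm hFm (by rw [eD_0, eF_0]; omega)
      (by rw [eD_1, eF_1]; omega) (by rw [eD_2, eF_2]; omega)
  · exact mono_mem_sq' I _ _ α _ hDm hDm (by rw [eD_0]; omega)
      (by rw [eD_1]; omega) (by rw [eD_2]; omega)
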